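/- arXiv:2303.14346 — 3 statements merged into one kernel-verified Lean document; each statement's English description precedes it below -/
import Mathlib

section
/- Under the conformal prediction setup with almost surely distinct scores, the coverage probability also satisfies the upper bound Pr(Y_test ∈ C(X_test)) ≤ 1 − α + 1/(N+1). -/
/-! By exchangeability the rank of the test score among all `N + 1` scores has the same law as
the rank of any other score. Ties are null, so for a fixed `r` the events `{rank of score i = r}`
are almost surely disjoint in `i`, and each has probability at most `1 / (N + 1)`. A test score
below the `k`-th smallest calibration score has rank at most `k` (again up to ties), so coverage
is at most `k / (N + 1) ≤ 1 - α + 1 / (N + 1)`. -/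

open MeasureTheory ProbabilityTheory Finset
open scoped ENNReal

namespace Conformal

section Rank

variable {ι κ α : Type*} [Fintype ι] [LinearOrder α]

def rank (w : ι → α) (i : ι) : ℕ := #{j | w j ≤ w i}

lemma one_le_rank (w : ι → α) (i : ι) : 1 ≤ rank w i :=
  card_pos.2 ⟨i, by simp⟩

lemma rank_lt_rank {w : ι → α} {i j : ι} (h : w i < w j) : rank w i < rank w j := by
  refine card_lt_card ⟨monotone_filter_right _ fun k _ hk => le_trans hk h.le, fun hsub => ?_⟩
  have hj : w j ≤ w i := (mem_filter.1 (hsub (by simp : j ∈ ({k | w k ≤ w j} : Finset ι)))).2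
  exact hj.not_gt h

lemma apply_eq_of_rank_eq {w : ι → α} {i j : ι} (h : rank w i = rank w j) : w i = w j := by
  rcases lt_trichotomy (w i) (w j) with hlt | heq | hgt
  · exact absurd h (rank_lt_rank hlt).ne
  · exact heq
  · exact absurd h (rank_lt_rank hgt).ne'

lemma rank_comp_equiv [Fintype κ] (w : ι → α) (σ : κ ≃ ι) (i : κ) :
    rank (w ∘ σ) i = rank w (σ i) := by
  simp only [rank, card_filter, Function.comp_apply]
  exact σ.sum_comp fun j => if w j ≤ w (σ i) then 1 else 0

lemma rank_last {n : ℕ} (w : Fin (n + 1) → α) :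
    rank w (Fin.last n) = #{j : Fin n | w j.castSucc ≤ w (Fin.last n)} + 1 := by
  simp only [rank, card_filter, Fin.sum_univ_castSucc, le_refl, if_true]

lemma card_lt_le_of_le_sort {n : ℕ} {u : Fin n → α} {m : Fin n} {x : α}
    (hx : x ≤ u (Tuple.sort u m)) : #{j | u j < x} ≤ m := by
  have hperm : #{j | u j < x} = #{i | (u ∘ Tuple.sort u) i < x} := by
    simp only [card_filter, Function.comp_apply]
    exact (Equiv.sum_comp (Tuple.sort u) fun j => if u j < x then 1 else 0).symm
  rw [hperm, ← not_lt, Tuple.lt_card_lt_iff_apply_lt_of_monotone (Tuple.monotone_sort u)]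
  exact hx.not_gt

lemma rank_last_le_of_le_sort {n : ℕ} {w : Fin (n + 1) → α}
    (hne : ∀ j : Fin n, w j.castSucc ≠ w (Fin.last n)) (m : Fin n)
    (hle : w (Fin.last n) ≤ w (Tuple.sort (fun j : Fin n => w j.castSucc) m).castSucc) :
    rank w (Fin.last n) ≤ m + 1 := by
  have hlt : #{j : Fin n | w j.castSucc ≤ w (Fin.last n)}
      = #{j : Fin n | w j.castSucc < w (Fin.last n)} :=
    congrArg card (filter_congr fun j _ => le_iff_lt_or_eq.trans (or_iff_left (hne j)))
  have := card_lt_le_of_le_sort (u := fun j : Fin n => w j.castSucc) hle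
  rw [rank_last, hlt]
  omega

end Rank

section Exchangeable

variable {Ω ι β γ : Type*} [MeasurableSpace Ω] [MeasurableSpace β] [MeasurableSpace γ]
  {μ : Measure Ω}

def Exchangeable (μ : Measure Ω) (V : Ω → ι → β) : Prop :=
  ∀ σ : Equiv.Perm ι, μ.map (fun ω i => V ω (σ i)) = μ.map V

lemma measurable_comp_perm {V : Ω → ι → β} (hV : Measurable V) (σ : Equiv.Perm ι) :
    Measurable fun ω i => V ω (σ i) :=
  measurable_pi_lambda _ fun i => (measurable_pi_apply (σ i)).comp hV

lemma Exchangeable.comp {V : Ω → ι → β} (hV : Exchangeable μ V) (hVm : Measurable V)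
    {g : β → γ} (hg : Measurable g) : Exchangeable μ fun ω i => g (V ω i) := by
  intro σ
  have hgm : Measurable fun v : ι → β => fun i => g (v i) :=
    measurable_pi_lambda _ fun i => hg.comp (measurable_pi_apply i)
  calc μ.map (fun ω i => g (V ω (σ i)))
      = (μ.map fun ω i => V ω (σ i)).map fun v i => g (v i) :=
        (Measure.map_map hgm (measurable_comp_perm hVm σ)).symm
    _ = (μ.map V).map fun v i => g (v i) := by rw [hV σ]
    _ = μ.map fun ω i => g (V ω i) := Measure.map_map hgm hVm

variable [Fintype ι]

lemma measurable_rank (i : ι) : Measurable fun w : ι → ℝ => rank w i := by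
  simp only [rank, card_filter]
  exact Finset.measurable_sum _ fun j _ => Measurable.ite
    (measurableSet_le (measurable_pi_apply j) (measurable_pi_apply i))
    measurable_const measurable_const

lemma measurableSet_rank_eq (i : ι) (r : ℕ) : MeasurableSet {w : ι → ℝ | rank w i = r} :=
  measurable_rank i (measurableSet_singleton r)

lemma Exchangeable.measure_rank_eq {W : Ω → ι → ℝ} (hW : Exchangeable μ W) (hWm : Measurable W)
    (i j : ι) (r : ℕ) : μ {ω | rank (W ω) i = r} = μ {ω | rank (W ω) j = r} := by
  classical
  set σ := Equiv.swap j i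
  have hrank : ∀ ω, rank (fun k => W ω (σ k)) j = rank (W ω) i := fun ω => by
    rw [← Function.comp_def, rank_comp_equiv, Equiv.swap_apply_left]
  calc μ {ω | rank (W ω) i = r}
      = (μ.map fun ω k => W ω (σ k)) {w | rank w j = r} := by
        rw [Measure.map_apply (measurable_comp_perm hWm σ) (measurableSet_rank_eq j r)]
        simp only [Set.preimage_ofPred_eq, hrank]
    _ = μ {ω | rank (W ω) j = r} := by
        rw [hW σ, Measure.map_apply hWm (measurableSet_rank_eq j r)]
        rfl

lemma Exchangeable.measure_rank_eq_le_inv_card [IsProbabilityMeasure μ] {W : Ω → ι → ℝ}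
    (hW : Exchangeable μ W) (hWm : Measurable W)
    (hties : ∀ i j, i ≠ j → μ {ω | W ω i = W ω j} = 0) (i : ι) (r : ℕ) :
    μ {ω | rank (W ω) i = r} ≤ (Fintype.card ι : ℝ≥0∞)⁻¹ := by
  have hdisj : Set.Pairwise (univ : Finset ι)
      (Function.onFun (AEDisjoint μ) fun j => {ω | rank (W ω) j = r}) := fun j _ k _ hjk =>
    measure_mono_null (fun ω hω => apply_eq_of_rank_eq (hω.1.trans hω.2.symm)) (hties j k hjk)
  rw [ENNReal.le_inv_iff_mul_le, mul_comm]
  calc (Fintype.card ι : ℝ≥0∞) * μ {ω | rank (W ω) i = r}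
      = ∑ j, μ {ω | rank (W ω) j = r} := by simp [hW.measure_rank_eq hWm _ i]
    _ ≤ μ Set.univ := sum_measure_le_measure_univ
        (fun j _ => (hWm (measurableSet_rank_eq j r)).nullMeasurableSet) hdisj
    _ = 1 := measure_univ

lemma Exchangeable.measure_rank_le_le_div_card [IsProbabilityMeasure μ] {W : Ω → ι → ℝ}
    (hW : Exchangeable μ W) (hWm : Measurable W)
    (hties : ∀ i j, i ≠ j → μ {ω | W ω i = W ω j} = 0) (i : ι) (k : ℕ) :
    μ {ω | rank (W ω) i ≤ k} ≤ k / Fintype.card ι := by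
  have hcover : {ω | rank (W ω) i ≤ k} ⊆ ⋃ r ∈ Icc 1 k, {ω | rank (W ω) i = r} :=
    fun ω hω => Set.mem_biUnion (mem_Icc.2 ⟨one_le_rank _ _, hω⟩) rfl
  calc μ {ω | rank (W ω) i ≤ k}
      ≤ ∑ r ∈ Icc 1 k, μ {ω | rank (W ω) i = r} := measure_mono hcover |>.trans
        (measure_biUnion_finset_le _ _)
    _ ≤ ∑ r ∈ Icc 1 k, (Fintype.card ι : ℝ≥0∞)⁻¹ :=
        sum_le_sum fun r _ => hW.measure_rank_eq_le_inv_card hWm hties i r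
    _ = k / Fintype.card ι := by simp [div_eq_mul_inv]

end Exchangeable

lemma natCast_div_le_ofReal_of_eq_ceil {n k : ℕ} {α : ℝ}
    (hk : (k : ℤ) = ⌈((n : ℝ) + 1) * (1 - α)⌉) :
    (k : ℝ≥0∞) / (n + 1 : ℕ) ≤ ENNReal.ofReal (1 - α + 1 / ((n : ℝ) + 1)) := by
  have hk_lt : (k : ℝ) < (n + 1) * (1 - α) + 1 := by
    exact_mod_cast hk ▸ Int.ceil_lt_add_one (((n : ℝ) + 1) * (1 - α))
  rw [← ENNReal.ofReal_natCast, ← ENNReal.ofReal_natCast,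
    ← ENNReal.ofReal_div_of_pos (by positivity)]
  refine ENNReal.ofReal_le_ofReal ?_
  rw [div_le_iff₀ (by positivity)]
  push_cast
  field_simp
  linarith

end Conformal

open Conformal in
/-- **Conformal coverage guarantee (upper bound)** under almost surely distinct scores. -/
theorem conformal_coverage_upper_bound
    {Ω 𝒳 𝒴 : Type*} [MeasureSpace Ω] [IsProbabilityMeasure (ℙ : Measure Ω)]
    [MeasurableSpace 𝒳] [MeasurableSpace 𝒴]
    (N : ℕ)
    (X : Fin (N + 1) → Ω → 𝒳) (Y : Fin (N + 1) → Ω → 𝒴)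
    (hX : ∀ i, Measurable (X i)) (hY : ∀ i, Measurable (Y i))
    (s : 𝒳 → 𝒴 → ℝ) (hs : Measurable (fun p : 𝒳 × 𝒴 => s p.1 p.2))
    (hexch : ∀ π : Equiv.Perm (Fin (N + 1)),
      Measure.map (fun ω i => (X (π i) ω, Y (π i) ω)) (ℙ : Measure Ω)
        = Measure.map (fun ω i => (X i ω, Y i ω)) (ℙ : Measure Ω))
    -- the N+1 scores are almost surely distinct (no ties)
    (hdistinct : ∀ i j : Fin (N + 1), i ≠ j →
      (ℙ : Measure Ω) {ω | s (X i ω) (Y i ω) = s (X j ω) (Y j ω)} = 0)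
    (α : ℝ)
    (k : ℕ) (hk : (k : ℤ) = ⌈((N : ℝ) + 1) * (1 - α)⌉)
    (hk1 : 1 ≤ k) (hkN : k ≤ N)
    (qhat : Ω → ℝ)
    (hq : ∀ ω, qhat ω =
      (fun i : Fin N => s (X i.castSucc ω) (Y i.castSucc ω))
        (Tuple.sort (fun i : Fin N => s (X i.castSucc ω) (Y i.castSucc ω))
          ⟨k - 1, by omega⟩)) :
    (ℙ : Measure Ω) {ω | s (X (Fin.last N) ω) (Y (Fin.last N) ω) ≤ qhat ω}
      ≤ ENNReal.ofReal (1 - α + 1 / ((N : ℝ) + 1)) := by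
  set W : Ω → Fin (N + 1) → ℝ := fun ω i => s (X i ω) (Y i ω)
  have hXY : Measurable fun ω i => (X i ω, Y i ω) :=
    measurable_pi_lambda _ fun i => (hX i).prodMk (hY i)
  have hWm : Measurable W := measurable_pi_lambda _ fun i => hs.comp ((hX i).prodMk (hY i))
  have hW : Exchangeable ℙ W := Exchangeable.comp (V := fun ω i => (X i ω, Y i ω)) hexch hXY hs
  have hlast : ∀ᵐ ω ∂ℙ, ∀ j : Fin N, W ω j.castSucc ≠ W ω (Fin.last N) :=
    ae_all_iff.2 fun j => measure_eq_zero_iff_ae_notMem.1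
      (hdistinct _ _ (Fin.castSucc_lt_last j).ne)
  have hcover : {ω | W ω (Fin.last N) ≤ qhat ω} ≤ᵐ[ℙ] {ω | rank (W ω) (Fin.last N) ≤ k} := by
    filter_upwards [hlast] with ω hω (hle : W ω (Fin.last N) ≤ qhat ω)
    rw [hq ω] at hle
    change rank (W ω) (Fin.last N) ≤ k
    calc rank (W ω) (Fin.last N)
        ≤ k - 1 + 1 := rank_last_le_of_le_sort hω ⟨k - 1, by omega⟩ hle
      _ = k := Nat.sub_add_cancel hk1
  calc ℙ {ω | W ω (Fin.last N) ≤ qhat ω}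
      ≤ ℙ {ω | rank (W ω) (Fin.last N) ≤ k} := measure_mono_ae hcover
    _ ≤ k / Fintype.card (Fin (N + 1)) := hW.measure_rank_le_le_div_card hWm hdistinct _ k
    _ ≤ ENNReal.ofReal (1 - α + 1 / ((N : ℝ) + 1)) := by
        rw [Fintype.card_fin]
        exact natCast_div_le_ofReal_of_eq_ceil hk
end

section
/- If s₁,…,s_{N+1} are exchangeable real random variables that are almost surely distinct, then for any k ∈ {1,…,N+1}, the probability that s_{N+1} is among the k smallest of the N+1 values equals k/(N+1). -/
open MeasureTheory ProbabilityTheory Finset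
open scoped ENNReal

lemma rank_card {n k : ℕ} (x : Fin n → ℝ) (hx : Function.Injective x)
    (hk1 : 1 ≤ k) (hk2 : k ≤ n) :
    (Finset.univ.filter (fun j : Fin n =>
      (Finset.univ.filter (fun i => x i ≤ x j)).card ≤ k)).card = k := by
  set r : Fin n → ℕ := fun j => (Finset.univ.filter (fun i => x i ≤ x j)).card with hr
  have hmono : ∀ a b, x a < x b → r a < r b := by
    intro a b hab
    apply Finset.card_lt_card
    constructor
    · intro i hi
      simp only [mem_filter, mem_univ, true_and] at *
      exact hi.trans hab.le
    · intro hsub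
      have := hsub (by simp : b ∈ Finset.univ.filter (fun i => x i ≤ x b))
      simp only [mem_filter, mem_univ, true_and] at this
      exact absurd this (not_le.mpr hab)
  have hinj : Function.Injective r := by
    intro a b hab
    by_contra hne
    rcases lt_or_gt_of_ne (fun h => hne (hx h) : x a ≠ x b) with h | h
    · exact absurd hab (hmono a b h).ne
    · exact absurd hab.symm (hmono b a h).ne
  have hmem : ∀ j, r j ∈ Finset.Icc 1 n := by
    intro j
    simp only [Finset.mem_Icc]
    constructor
    · have : j ∈ Finset.univ.filter (fun i => x i ≤ x j) := by simp
      exact Finset.card_pos.mpr ⟨j, this⟩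
    · simpa using Finset.card_filter_le Finset.univ (fun i => x i ≤ x j)
  have himg : Finset.univ.image r = Finset.Icc 1 n := by
    apply Finset.eq_of_subset_of_card_le
    · intro m hm
      simp only [Finset.mem_image] at hm
      obtain ⟨j, _, rfl⟩ := hm
      exact hmem j
    · rw [Finset.card_image_of_injective _ hinj]
      simp [Nat.Icc_eq_range', Nat.card_Icc]
  have hc : (Finset.univ.filter (fun j => r j ≤ k)).card
      = ((Finset.univ.filter (fun j => r j ≤ k)).image r).card := by
    rw [Finset.card_image_of_injective _ hinj]
  rw [hc]
  have himg2 : (Finset.univ.filter (fun j => r j ≤ k)).image r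
      = (Finset.univ.image r).filter (fun m => m ≤ k) := by
    ext m
    simp only [Finset.mem_image, Finset.mem_filter, Finset.mem_univ, true_and]
    constructor
    · rintro ⟨j, hj, rfl⟩; exact ⟨⟨j, rfl⟩, hj⟩
    · rintro ⟨⟨j, rfl⟩, hj⟩; exact ⟨j, hj, rfl⟩
  rw [himg2, himg]
  have : (Finset.Icc 1 n).filter (fun m => m ≤ k) = Finset.Icc 1 k := by
    ext m; simp only [Finset.mem_filter, Finset.mem_Icc]; omega
  rw [this, Nat.card_Icc]; omega

/-- For exchangeable, a.s. distinct real random variables `s₁, …, s_{N+1}`, the probability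
that `s_{N+1}` is among the `k` smallest of the `N+1` values equals `k/(N+1)`. -/
theorem exchangeable_rank_uniform
    {Ω : Type*} [MeasureSpace Ω] [IsProbabilityMeasure (ℙ : Measure Ω)]
    (N : ℕ) (sc : Fin (N + 1) → Ω → ℝ)
    (hmeas : ∀ i, Measurable (sc i))
    (hexch : ∀ π : Equiv.Perm (Fin (N + 1)),
      Measure.map (fun ω i => sc (π i) ω) (ℙ : Measure Ω) = Measure.map (fun ω i => sc i ω) (ℙ : Measure Ω))
    (hdistinct : ∀ i j : Fin (N + 1), i ≠ j → (ℙ : Measure Ω) {ω | sc i ω = sc j ω} = 0)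
    (k : ℕ) (hk1 : 1 ≤ k) (hk2 : k ≤ N + 1) :
    (ℙ : Measure Ω) {ω | (Finset.univ.filter
        (fun i : Fin (N + 1) => sc i ω ≤ sc (Fin.last N) ω)).card ≤ k}
      = ENNReal.ofReal ((k : ℝ) / ((N : ℝ) + 1)) := by
  classical
  set μ := (ℙ : Measure Ω) with hμ
  set X : Ω → (Fin (N + 1) → ℝ) := fun ω i => sc i ω with hXdef
  have hXmeas : Measurable X := measurable_pi_lambda _ hmeas
  -- measurable rank-count functions on the path space
  have hcnt : ∀ j : Fin (N + 1), Measurable (fun x : Fin (N + 1) → ℝ =>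
      (Finset.univ.filter (fun i => x i ≤ x j)).card) := by
    intro j
    have heq : (fun x : Fin (N + 1) → ℝ => (Finset.univ.filter (fun i => x i ≤ x j)).card)
        = fun x => ∑ i, if x i ≤ x j then 1 else 0 := by
      funext x; rw [Finset.card_filter]
    rw [heq]
    exact Finset.measurable_sum _ fun i _ =>
      Measurable.ite (measurableSet_le (measurable_pi_apply i) (measurable_pi_apply j))
        measurable_const measurable_const
  have hSmeas : ∀ j : Fin (N + 1), MeasurableSet
      {x : Fin (N + 1) → ℝ | (Finset.univ.filter (fun i => x i ≤ x j)).card ≤ k} :=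
    fun j => (hcnt j) measurableSet_Iic
  -- events
  set E : Fin (N + 1) → Set Ω := fun j =>
    {ω | (Finset.univ.filter (fun i => sc i ω ≤ sc j ω)).card ≤ k} with hEdef
  have hEpre : ∀ j, E j = X ⁻¹' {x : Fin (N + 1) → ℝ |
      (Finset.univ.filter (fun i => x i ≤ x j)).card ≤ k} := fun j => rfl
  have hEmeas : ∀ j, MeasurableSet (E j) := fun j => (hEpre j) ▸ hXmeas (hSmeas j)
  -- card of filter over a permuted predicate
  have hcard : ∀ (p : Fin (N + 1) → Prop) [DecidablePred p] (π : Equiv.Perm (Fin (N + 1))),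
      (Finset.univ.filter (fun i => p (π i))).card = (Finset.univ.filter p).card := by
    intro p _ π
    apply Finset.card_bij (fun i _ => π i)
    · intro a ha; simp only [mem_filter, mem_univ, true_and] at *; exact ha
    · intro a _ b _ h; exact π.injective h
    · intro b hb
      refine ⟨π.symm b, ?_, by simp⟩
      simp only [mem_filter, mem_univ, true_and, Equiv.apply_symm_apply] at *
      exact hb
  -- Step A: all events have the same probability
  have hEj : ∀ j, μ (E j) = μ (E (Fin.last N)) := by
    intro j
    set π := Equiv.swap j (Fin.last N) with hπ
    have hπmeas : Measurable (fun ω i => sc (π i) ω) :=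
      measurable_pi_lambda _ fun i => hmeas _
    have h1 : μ (E (Fin.last N)) = Measure.map X μ
        {x : Fin (N + 1) → ℝ | (Finset.univ.filter (fun i => x i ≤ x (Fin.last N))).card ≤ k} := by
      rw [Measure.map_apply hXmeas (hSmeas (Fin.last N))]
      rfl
    rw [h1, ← hexch π, Measure.map_apply hπmeas (hSmeas (Fin.last N))]
    congr 1
    ext ω
    simp only [Set.mem_preimage, Set.mem_setOf_eq, hEdef]
    simp only [hπ, Equiv.swap_apply_right,
      hcard (fun i => sc i ω ≤ sc j ω) (Equiv.swap j (Fin.last N))]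
  -- Step B: a.e. injectivity
  have hae : ∀ᵐ ω ∂μ, Function.Injective fun i => sc i ω := by
    have hnull : μ (⋃ (i) (j) (_ : i ≠ j), {ω | sc i ω = sc j ω}) = 0 :=
      measure_iUnion_null fun i => measure_iUnion_null fun j =>
        measure_iUnion_null fun hij => hdistinct i j hij
    rw [ae_iff]
    refine measure_mono_null ?_ hnull
    intro ω hω
    simp only [Set.mem_setOf_eq, Function.Injective] at hω
    push_neg at hω
    obtain ⟨i, j, h1, h2⟩ := hω
    exact Set.mem_iUnion.mpr ⟨i, Set.mem_iUnion.mpr ⟨j, Set.mem_iUnion.mpr ⟨h2, h1⟩⟩⟩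
  have hsum : ∀ᵐ ω ∂μ, ((Finset.univ.filter (fun j => ω ∈ E j)).card : ℝ≥0∞) = (k : ℝ≥0∞) := by
    filter_upwards [hae] with ω hω
    norm_cast
    exact rank_card (fun i => sc i ω) hω hk1 hk2
  -- Step C: sum up
  have hlin : ∑ j, μ (E j) = (k : ℝ≥0∞) := by
    have h1 : ∑ j, μ (E j) = ∫⁻ ω, ∑ j, (E j).indicator (fun _ => (1 : ℝ≥0∞)) ω ∂μ := by
      rw [lintegral_finset_sum _ fun j _ =>
        (measurable_const.indicator (hEmeas j))]
      exact Finset.sum_congr rfl fun j _ => (lintegral_indicator_one (hEmeas j)).symm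
    rw [h1]
    have h2 : ∫⁻ ω, ∑ j, (E j).indicator (fun _ => (1 : ℝ≥0∞)) ω ∂μ
        = ∫⁻ _, (k : ℝ≥0∞) ∂μ := by
      apply lintegral_congr_ae
      filter_upwards [hsum] with ω hω
      rw [← hω]
      simp only [Set.indicator_apply]
      rw [Finset.card_filter]
      push_cast
      rfl
    rw [h2, lintegral_const, measure_univ, mul_one]
  have htot : ((N : ℝ≥0∞) + 1) * μ (E (Fin.last N)) = (k : ℝ≥0∞) := by
    calc ((N : ℝ≥0∞) + 1) * μ (E (Fin.last N))
        = ∑ _j : Fin (N + 1), μ (E (Fin.last N)) := by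
          rw [Finset.sum_const, Finset.card_univ, Fintype.card_fin]
          simp [nsmul_eq_mul]
      _ = ∑ j, μ (E j) := by exact (Finset.sum_congr rfl fun j _ => (hEj j).symm)
      _ = (k : ℝ≥0∞) := hlin
  have hNne : ((N : ℝ≥0∞) + 1) ≠ 0 := by simp
  have hNnt : ((N : ℝ≥0∞) + 1) ≠ ⊤ := by simp
  have hfinal : μ (E (Fin.last N)) = (k : ℝ≥0∞) / ((N : ℝ≥0∞) + 1) := by
    rw [ENNReal.eq_div_iff hNne hNnt]
    exact htot
  have hgoal : {ω | (Finset.univ.filter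
      (fun i : Fin (N + 1) => sc i ω ≤ sc (Fin.last N) ω)).card ≤ k} = E (Fin.last N) := rfl
  rw [hgoal, hfinal]
  rw [ENNReal.ofReal_div_of_pos (by positivity)]
  congr 1
  · simp
  · rw [← Nat.cast_one (R := ℝ), ← Nat.cast_add, ENNReal.ofReal_natCast]
    push_cast
    ring
end

section
/- For any predicted mean ŷ ∈ ℝ, standard deviation σ̂ > 0, multiplicative correction q̂ ≥ 1, and any point ẏ ∈ ℝ, the Gaussian negative log likelihood of ẏ under N(ŷ, (σ̂q̂)²) is less than or equal to that under N(ŷ, σ̂²) whenever |ẏ − ŷ| ≥ σ̂ q̂ √(log(q̂²)·q̂²/(q̂²−1)) (and for q̂ = 1 they are equal). -/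
open Real

noncomputable def gaussianNLL (y μ σ : ℝ) : ℝ :=
  (y - μ) ^ 2 / (2 * σ ^ 2) + log σ + (1 / 2) * log (2 * π)

theorem gaussianNLL_sub_gaussianNLL_mul {y μ σ q : ℝ} (hσ : σ ≠ 0) (hq : q ≠ 0) :
    gaussianNLL y μ σ - gaussianNLL y μ (σ * q) =
      (y - μ) ^ 2 * (q ^ 2 - 1) / (2 * (σ * q) ^ 2) - log q := by
  rw [gaussianNLL, gaussianNLL, log_mul hσ hq]
  field_simp
  ring

theorem gaussianNLL_mul_le_iff {y μ σ q : ℝ} (hσ : σ ≠ 0) (hq : q ≠ 0) :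
    gaussianNLL y μ (σ * q) ≤ gaussianNLL y μ σ ↔
      log q ≤ (y - μ) ^ 2 * (q ^ 2 - 1) / (2 * (σ * q) ^ 2) := by
  rw [← sub_nonneg, gaussianNLL_sub_gaussianNLL_mul hσ hq, sub_nonneg]

/-- `σ q √(log (q²) / (q² - 1))` is the exact distance beyond which inflating `σ` by `q` lowers
the NLL; the threshold in the theorem exceeds it by a factor `q`. -/
theorem log_le_of_sq_threshold_le {d σ q : ℝ} (hσ : σ ≠ 0) (hq : 1 < q)
    (h : (σ * q) ^ 2 * (log (q ^ 2) / (q ^ 2 - 1)) ≤ d ^ 2) :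
    log q ≤ d ^ 2 * (q ^ 2 - 1) / (2 * (σ * q) ^ 2) := by
  have hq2 : 0 < q ^ 2 - 1 := by nlinarith
  rw [mul_div_assoc', div_le_iff₀ hq2, log_pow] at h
  rw [le_div_iff₀ (by positivity)]
  push_cast at h
  linarith

theorem sq_mul_le_sq_of_mul_sqrt_le_abs {a t d : ℝ} (ha : 0 ≤ a) (ht : 0 ≤ t)
    (h : a * √t ≤ |d|) : a ^ 2 * t ≤ d ^ 2 := by
  have := pow_le_pow_left₀ (by positivity) h 2
  rwa [mul_pow, sq_sqrt ht, sq_abs] at this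

/-- Inflating the standard deviation by a conformal factor `qhat ≥ 1` lowers the Gaussian NLL
for sufficiently distant points: if `|ydot − yhat| ≥ sigmahatqhat√(log(qhat²)·qhat²/(qhat²−1))`, then
`NLL(ydot; yhat, (sigmahatqhat)²) ≤ NLL(ydot; yhat, sigmahat²)`, with equality of NLLs when `qhat = 1`. -/
theorem inflated_nll_le (yhat sigmahat qhat ydot : ℝ) (hσ : 0 < sigmahat) (hq : 1 ≤ qhat) :
    ( |ydot - yhat| ≥ sigmahat * qhat * Real.sqrt (Real.log (qhat ^ 2) * qhat ^ 2 / (qhat ^ 2 - 1)) →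
      (ydot - yhat) ^ 2 / (2 * (sigmahat * qhat) ^ 2) + Real.log (sigmahat * qhat) + (1 / 2) * Real.log (2 * Real.pi)
        ≤ (ydot - yhat) ^ 2 / (2 * sigmahat ^ 2) + Real.log sigmahat + (1 / 2) * Real.log (2 * Real.pi) )
    ∧
    ( qhat = 1 →
      (ydot - yhat) ^ 2 / (2 * (sigmahat * qhat) ^ 2) + Real.log (sigmahat * qhat) + (1 / 2) * Real.log (2 * Real.pi)
        = (ydot - yhat) ^ 2 / (2 * sigmahat ^ 2) + Real.log sigmahat + (1 / 2) * Real.log (2 * Real.pi) ) := by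
  refine ⟨fun hfar => ?_, fun hq1 => by simp [hq1]⟩
  rcases hq.eq_or_lt with rfl | hq1
  · simp
  change gaussianNLL ydot yhat (sigmahat * qhat) ≤ gaussianNLL ydot yhat sigmahat
  rw [gaussianNLL_mul_le_iff hσ.ne' (by positivity)]
  have hq2 : 1 < qhat ^ 2 := by nlinarith
  have hratio : 0 ≤ log (qhat ^ 2) / (qhat ^ 2 - 1) :=
    div_nonneg (log_nonneg hq2.le) (by linarith)
  apply log_le_of_sq_threshold_le hσ.ne' hq1
  calc (sigmahat * qhat) ^ 2 * (log (qhat ^ 2) / (qhat ^ 2 - 1))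
      ≤ (sigmahat * qhat) ^ 2 * (log (qhat ^ 2) * qhat ^ 2 / (qhat ^ 2 - 1)) := by
        rw [mul_div_right_comm]
        gcongr
        exact le_mul_of_one_le_right hratio hq2.le
    _ ≤ (ydot - yhat) ^ 2 :=
        sq_mul_le_sq_of_mul_sqrt_le_abs (by positivity)
          (by rw [mul_div_right_comm]; positivity) hfar
end
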